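/- The generator of the commutant unitary group is L₁ = ⌊L/2⌋: for every θ ∈ ℝ and every ℓ ∈ ℤ, U₁(θ) e_ℓ = exp(2 i θ · ⌊ℓ/2⌋) • e_ℓ, where ⌊ℓ/2⌋ denotes floor division of the integer ℓ by 2 (so ⌊ℓ/2⌋ = ℓ/2 for even ℓ and (ℓ−1)/2 for odd ℓ). -/
import Mathlib


open Complex

noncomputable section

/-- The Hilbert space `H := ℓ²(ℤ, ℂ)`. -/
abbrev H : Type := lp (fun _ : ℤ => ℂ) 2

/-- The orthonormal basis vectors `e ℓ = lp.single 2 ℓ 1`. -/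
def e (ℓ : ℤ) : H := lp.single 2 ℓ 1

/-- `U₁(θ) := exp(−iθ/2) • (cos(θ/2) • U(θ) + (i·sin(θ/2)) • U(θ+π))`. -/
def U₁ (U : ℝ → (H →L[ℂ] H)) (θ : ℝ) : H →L[ℂ] H :=
  Complex.exp (-Complex.I * θ / 2) •
    ((Real.cos (θ / 2) : ℂ) • U θ + (Complex.I * Real.sin (θ / 2)) • U (θ + Real.pi))

/-- **The generator of the commutant unitary group is `L₁ = ⌊L/2⌋`:** for every
`θ : ℝ` and `ℓ : ℤ`, `U₁(θ) e ℓ = exp(2iθ·⌊ℓ/2⌋) • e ℓ`, with `⌊ℓ/2⌋ = Int.fdiv ℓ 2`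
the floor division. -/
theorem U₁_diagonal_action
    (U : ℝ → (H →L[ℂ] H)) (V : unitary (H →L[ℂ] H))
    (hU : ∀ (θ : ℝ) (ℓ : ℤ), U θ (e ℓ) = Complex.exp (Complex.I * ℓ * θ) • e ℓ)
    (hV : ∀ ℓ : ℤ, (V : H →L[ℂ] H) (e ℓ) = e (ℓ + 1)) :
    ∀ (θ : ℝ) (ℓ : ℤ),
      U₁ U θ (e ℓ) = Complex.exp (2 * Complex.I * θ * (Int.fdiv ℓ 2 : ℤ)) • e ℓ := by
  intro θ ℓ
  have key : Complex.exp (-Complex.I * θ / 2) *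
      ((Real.cos (θ / 2) : ℂ) * Complex.exp (Complex.I * ℓ * θ) +
        Complex.I * Real.sin (θ / 2) * Complex.exp (Complex.I * ℓ * (θ + Real.pi))) =
      Complex.exp (2 * Complex.I * θ * (Int.fdiv ℓ 2 : ℤ)) := by
    have hcos : (Real.cos (θ / 2) : ℂ) = Complex.cos (θ / 2 : ℝ) := by
      simp [Complex.ofReal_cos]
    have hsin : (Real.sin (θ / 2) : ℂ) = Complex.sin (θ / 2 : ℝ) := by
      simp [Complex.ofReal_sin]
    rcases Int.even_or_odd ℓ with ⟨k, hk⟩ | ⟨k, hk⟩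
    · have hf : Int.fdiv ℓ 2 = k := by
        rw [Int.fdiv_eq_ediv_of_nonneg _ (by norm_num)]; omega
      subst hk
      rw [hf]
      have e1 : Complex.exp (Complex.I * (k + k : ℤ) * (θ + Real.pi)) =
          Complex.exp (Complex.I * (k + k : ℤ) * θ) * Complex.exp (k * (2 * Real.pi * Complex.I)) := by
        rw [← Complex.exp_add]; congr 1; push_cast; ring
      rw [e1, Complex.exp_int_mul_two_pi_mul_I, mul_one]
      have e2 : (Real.cos (θ / 2) : ℂ) + Complex.I * Real.sin (θ / 2) =
          Complex.exp ((θ / 2 : ℝ) * Complex.I) := by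
        rw [Complex.exp_mul_I, hcos, hsin]; ring
      calc Complex.exp (-Complex.I * θ / 2) *
            ((Real.cos (θ / 2) : ℂ) * Complex.exp (Complex.I * (k + k : ℤ) * θ) +
              Complex.I * Real.sin (θ / 2) * Complex.exp (Complex.I * (k + k : ℤ) * θ))
          = Complex.exp (-Complex.I * θ / 2) * Complex.exp (Complex.I * (k + k : ℤ) * θ) *
              ((Real.cos (θ / 2) : ℂ) + Complex.I * Real.sin (θ / 2)) := by ring
        _ = Complex.exp (-Complex.I * θ / 2 + Complex.I * (k + k : ℤ) * θ + (θ / 2 : ℝ) * Complex.I) := by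
              rw [e2, ← Complex.exp_add, ← Complex.exp_add]
        _ = Complex.exp (2 * Complex.I * θ * (k : ℤ)) := by congr 1; push_cast; ring
    · have hf : Int.fdiv ℓ 2 = k := by
        rw [Int.fdiv_eq_ediv_of_nonneg _ (by norm_num)]; omega
      subst hk
      rw [hf]
      have e1 : Complex.exp (Complex.I * (2 * k + 1 : ℤ) * (θ + Real.pi)) =
          Complex.exp (Complex.I * (2 * k + 1 : ℤ) * θ) *
            (Complex.exp (k * (2 * Real.pi * Complex.I)) * Complex.exp (Real.pi * Complex.I)) := by
        rw [← Complex.exp_add, ← Complex.exp_add]; congr 1; push_cast; ring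
      rw [e1, Complex.exp_int_mul_two_pi_mul_I, Complex.exp_pi_mul_I, one_mul]
      have e2 : (Real.cos (θ / 2) : ℂ) - Complex.I * Real.sin (θ / 2) =
          Complex.exp ((-(θ / 2) : ℝ) * Complex.I) := by
        rw [Complex.exp_mul_I, hcos, hsin]
        push_cast
        rw [Complex.cos_neg, Complex.sin_neg]; ring
      calc Complex.exp (-Complex.I * θ / 2) *
            ((Real.cos (θ / 2) : ℂ) * Complex.exp (Complex.I * (2 * k + 1 : ℤ) * θ) +
              Complex.I * Real.sin (θ / 2) * (Complex.exp (Complex.I * (2 * k + 1 : ℤ) * θ) * (-1)))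
          = Complex.exp (-Complex.I * θ / 2) * Complex.exp (Complex.I * (2 * k + 1 : ℤ) * θ) *
              ((Real.cos (θ / 2) : ℂ) - Complex.I * Real.sin (θ / 2)) := by ring
        _ = Complex.exp (-Complex.I * θ / 2 + Complex.I * (2 * k + 1 : ℤ) * θ + (-(θ / 2) : ℝ) * Complex.I) := by
              rw [e2, ← Complex.exp_add, ← Complex.exp_add]
        _ = Complex.exp (2 * Complex.I * θ * (k : ℤ)) := by congr 1; push_cast; ring
  simp only [U₁, ContinuousLinearMap.smul_apply, ContinuousLinearMap.add_apply, hU,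
    smul_smul, smul_add]
  rw [← key]
  push_cast
  module
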